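/- arXiv:2009.14121 — 2 statements merged into one kernel-verified Lean document; each statement's English description precedes it below -/
import Mathlib

section
/- Let G : ℕ → ℂ be multiplicative with finitely many bad primes, and suppose R_G(a) converges for every a ∈ ℕ. Then R_G(a) = 0 for every a ∈ ℕ that is not a multiple of the transparency conductor N_T(G). -/
open Filter Finset

noncomputable def mu (n : ℕ) : ℂ := ((ArithmeticFunction.moebius n : ℤ) : ℂ)

/-- Ramanujan sum `c_q(a) = ∑_{d ∣ gcd(q,a)} d · μ(q/d)` (Kluyver's formula). -/
noncomputable def cR (q a : ℕ) : ℂ :=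
  ∑ d ∈ (Nat.gcd q a).divisors, (d : ℂ) * mu (q / d)

/-- Partial sum of the Ramanujan series `R_G(a,x) = ∑_{q ≤ x} G(q) c_q(a)`. -/
noncomputable def RS (G : ℕ → ℂ) (a : ℕ) (x : ℝ) : ℂ :=
  ∑ q ∈ Finset.Icc 1 ⌊x⌋₊, G q * cR q a

/-- Partial sum of the coprime series `S_G(a,x) = ∑_{r ≤ x, (r,a)=1} G(r) μ(r)`. -/
noncomputable def SS (G : ℕ → ℂ) (a : ℕ) (x : ℝ) : ℂ :=
  ∑ r ∈ (Finset.Icc 1 ⌊x⌋₊).filter fun r => Nat.gcd r a = 1, G r * mu r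

/-- Partial sum of the Lucht series `L_G(d,x) = ∑_{K ≤ x} μ(K) G(dK)`. -/
noncomputable def LS (G : ℕ → ℂ) (d : ℕ) (x : ℝ) : ℂ :=
  ∑ K ∈ Finset.Icc 1 ⌊x⌋₊, mu K * G (d * K)

def RTendsto (G : ℕ → ℂ) (a : ℕ) (L : ℂ) : Prop :=
  Tendsto (fun x : ℝ => RS G a x) atTop (nhds L)

def RConv (G : ℕ → ℂ) (a : ℕ) : Prop := ∃ L, RTendsto G a L

def STendsto (G : ℕ → ℂ) (a : ℕ) (L : ℂ) : Prop :=
  Tendsto (fun x : ℝ => SS G a x) atTop (nhds L)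

def SConv (G : ℕ → ℂ) (a : ℕ) : Prop := ∃ L, STendsto G a L

def LTendsto (G : ℕ → ℂ) (d : ℕ) (L : ℂ) : Prop :=
  Tendsto (fun x : ℝ => LS G d x) atTop (nhds L)

def LConv (G : ℕ → ℂ) (d : ℕ) : Prop := ∃ L, LTendsto G d L

/-- `G` is multiplicative: `G(ab) = G(a)G(b)` for coprime positive `a, b`. -/
def IsMult (G : ℕ → ℂ) : Prop :=
  ∀ a b : ℕ, 0 < a → 0 < b → Nat.Coprime a b → G (a * b) = G a * G b

/-- `G` is completely multiplicative. -/
def IsCM (G : ℕ → ℂ) : Prop :=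
  ∀ a b : ℕ, 0 < a → 0 < b → G (a * b) = G a * G b

/-- The completely multiplicative index `w_{p,G}`: the largest `w ∈ ℕ` with
`G(p^k) = G(p)^k` for all `1 ≤ k ≤ w`, and `⊤` if this holds for all `k`. -/
noncomputable def cmIndex (G : ℕ → ℂ) (p : ℕ) : ℕ∞ :=
  ⨆ w ∈ {n : ℕ | ∀ k : ℕ, 1 ≤ k → k ≤ n → G (p ^ k) = G p ^ k}, (w : ℕ∞)

/-- The transparency index `v_{p,G}`: least `K ≥ 0` with `G(p^{K+1}) ≠ 1`, or `⊤`. -/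
noncomputable def trIdx (G : ℕ → ℂ) (p : ℕ) : ℕ∞ :=
  ⨅ K ∈ {K : ℕ | G (p ^ (K + 1)) ≠ 1}, (K : ℕ∞)

/-- A prime `p` is bad for `G` iff `1 ≤ |G(p)| ≤ p`. -/
def IsBad (G : ℕ → ℂ) (p : ℕ) : Prop :=
  1 ≤ ‖G p‖ ∧ ‖G p‖ ≤ p

def IsHyperbad (G : ℕ → ℂ) (p : ℕ) : Prop :=
  p.Prime ∧ IsBad G p ∧ cmIndex G p = ⊤

def IsSimplyBad (G : ℕ → ℂ) (p : ℕ) : Prop :=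
  p.Prime ∧ IsBad G p ∧ cmIndex G p ≠ ⊤

def IsSimplyTransparent (G : ℕ → ℂ) (p : ℕ) : Prop :=
  p.Prime ∧ G p = 1 ∧ cmIndex G p ≠ ⊤

/-- The Ramanujan conductor `N(G) = ∏_{p simply bad} p^{w_{p,G}}`. -/
noncomputable def ramCond (G : ℕ → ℂ) : ℕ :=
  ∏ᶠ p ∈ {p : ℕ | IsSimplyBad G p}, p ^ (cmIndex G p).toNat

/-- The transparency conductor `N_T(G) = ∏_{p simply transparent} p^{v_{p,G}}`. -/
noncomputable def transpCond (G : ℕ → ℂ) : ℕ :=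
  ∏ᶠ p ∈ {p : ℕ | IsSimplyTransparent G p}, p ^ (trIdx G p).toNat

/-- The squarefree radical of `n`. -/
def rad (n : ℕ) : ℕ := ∏ p ∈ n.primeFactors, p

/-- Euler–Ramanujan factor `E_G(a) = ∑_{d ∣ a·rad a} G(d) c_d(a)`. -/
noncomputable def EG (G : ℕ → ℂ) (a : ℕ) : ℂ := ∑ d ∈ (a * rad a).divisors, G d * cR d a

/-- `C_G(a) = ∑_{d ∣ a} G(d) μ(d)`. -/
noncomputable def CGsum (G : ℕ → ℂ) (a : ℕ) : ℂ := ∑ d ∈ a.divisors, G d * mu d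

/-- `D_G(a) = ∑_{d ∣ a} G(d) d`. -/
noncomputable def DGsum (G : ℕ → ℂ) (a : ℕ) : ℂ := ∑ d ∈ a.divisors, G d * (d : ℂ)

/-- `U_G(a) = ∑_{d ∣ a} μ(d) G(da)`. -/
noncomputable def UGsum (G : ℕ → ℂ) (a : ℕ) : ℂ := ∑ d ∈ a.divisors, mu d * G (d * a)

/-- Eratosthenes transform `F' = F ∗ μ`. -/
noncomputable def eratos (F : ℕ → ℂ) (n : ℕ) : ℂ := ∑ d ∈ n.divisors, F d * mu (n / d)

/-- The canonical Ramanujan coefficient of `F`: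
`G_F(q) = ∏_{p ∣ q} (1 - ∑_{K=0}^{v_p(q)-1} F'(p^K)/p^K)`. -/
noncomputable def canonCoeff (F : ℕ → ℂ) (q : ℕ) : ℂ :=
  ∏ p ∈ q.primeFactors,
    (1 - ∑ K ∈ Finset.range (q.factorization p), eratos F (p ^ K) / ((p : ℂ) ^ K))

/-- The opacity core `H_G(q) = G(q·N_T(G))·μ(q)²`. -/
noncomputable def opacityCore (G : ℕ → ℂ) (q : ℕ) : ℂ :=
  G (q * transpCond G) * mu q ^ 2

/-!
Kluyver's formula for `c_q(a)` turns `R_G(a,x)` into `∑_{d ∣ a} d · L_G(d, x/d)` with the Lucht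
series `L_G(d,x) = ∑_{K ≤ x} μ(K) G(dK)`, and by induction over the divisor lattice the convergence
of every `R_G(a)` gives the convergence of every `L_G(d)`. If `p` is simply transparent with
`v = v_{p,G}` and `p ∤ m`, splitting `K` according to `p ∣ K` gives
`L_G(m p^j, x) = G(p^j) A(x) - G(p^{j+1}) A(x/p)`, where `A` sums only over `K` prime to `p`.
For `j < v` both coefficients are `1`, while for `j = v` the second is `G(p^{v+1}) ≠ 1`; comparing
the two limits shows that `A` itself converges, so `L_G(m p^j) → 0` for `j < v`. When
`N_T(G) ∤ a` some such `p` has `p^v ∤ a`, so every divisor `d` of `a` has `v_p(d) < v` and all the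
terms of `∑_{d ∣ a} d · L_G(d, x/d)` tend to `0`.
-/

open ArithmeticFunction Topology

open Function in
theorem finprod_mem_dvd_of_isRelPrime {ι α : Type*} [CommMonoidWithZero α] [DecompositionMonoid α]
    {s : Set ι} {f : ι → α} {z : α} (hs : s.Pairwise (IsRelPrime on f))
    (h : ∀ i ∈ s, f i ∣ z) : (∏ᶠ i ∈ s, f i) ∣ z := by
  by_cases hfin : (s ∩ mulSupport f).Finite
  · rw [finprod_mem_eq_prod f hfin]
    refine Finset.prod_dvd_of_isRelPrime (hs.mono ?_) fun i hi => h i ?_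
    · simp [Set.inter_subset_left]
    · simp_all
  · rw [finprod_mem_eq_one_of_infinite hfin]
    exact one_dvd z

theorem tendsto_comp_div_const_atTop_iff {α : Type*} {l : Filter α} {f : ℝ → α} {c : ℝ}
    (hc : 0 < c) : Tendsto (fun x => f (x / c)) atTop l ↔ Tendsto f atTop l := by
  conv_rhs => rw [← (OrderIso.divRight₀ c hc).map_atTop, tendsto_map'_iff]
  rfl

theorem sum_Icc_filter_dvd {M : Type*} [AddCommMonoid M] (f : ℕ → M) {d : ℕ} (hd : 0 < d)
    (n : ℕ) : ∑ q ∈ (Icc 1 n).filter (d ∣ ·), f q = ∑ K ∈ Icc 1 (n / d), f (d * K) := by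
  have hmul : (Icc 1 n).filter (d ∣ ·) = (Icc 1 (n / d)).image (d * ·) := by
    ext q
    simp only [mem_filter, mem_Icc, mem_image, Nat.le_div_iff_mul_le hd]
    constructor
    · rintro ⟨⟨h1, h2⟩, K, rfl⟩
      exact ⟨K, ⟨Nat.pos_of_mul_pos_left h1, by linarith⟩, rfl⟩
    · rintro ⟨K, ⟨h1, h2⟩, rfl⟩
      exact ⟨⟨Nat.mul_pos hd h1, by linarith⟩, dvd_mul_right d K⟩
  rw [hmul, sum_image fun _ _ _ _ h => Nat.eq_of_mul_eq_mul_left hd h]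

theorem mu_prime_mul_of_dvd {p K : ℕ} (hp : p.Prime) (h : p ∣ K) : mu (p * K) = 0 := by
  have : ¬ Squarefree (p * K) := fun hs => hp.not_isUnit (hs p (mul_dvd_mul_left p h))
  simp [mu, moebius_eq_zero_of_not_squarefree this]

theorem mu_prime_mul_of_not_dvd {p K : ℕ} (hp : p.Prime) (h : ¬ p ∣ K) :
    mu (p * K) = - mu K := by
  simp [mu, isMultiplicative_moebius.map_mul_of_coprime (hp.coprime_iff_not_dvd.2 h),
    moebius_apply_prime hp]

theorem IsMult.map_prime_pow_mul {G : ℕ → ℂ} (hG : IsMult G) {p t : ℕ} (hp : p.Prime)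
    (ht : 0 < t) (hpt : ¬ p ∣ t) (i : ℕ) : G (p ^ i * t) = G (p ^ i) * G t :=
  hG _ _ (pow_pos hp.pos i) ht ((hp.coprime_iff_not_dvd.2 hpt).pow_left i)

theorem RS_eq_sum_divisors_LS (G : ℕ → ℂ) {a : ℕ} (ha : 0 < a) (x : ℝ) :
    RS G a x = ∑ d ∈ a.divisors, (d : ℂ) * LS G d (x / d) := by
  have hgcd : ∀ q ∈ Icc 1 ⌊x⌋₊, (q.gcd a).divisors = a.divisors.filter (· ∣ q) := by
    intro q hq
    ext d
    simp only [Nat.mem_divisors, mem_filter, Nat.dvd_gcd_iff, ne_eq, Nat.gcd_eq_zero_iff]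
    have : q ≠ 0 := Nat.one_le_iff_ne_zero.1 (mem_Icc.1 hq).1
    have : a ≠ 0 := ha.ne'
    tauto
  calc RS G a x
      = ∑ q ∈ Icc 1 ⌊x⌋₊, ∑ d ∈ a.divisors, if d ∣ q then (d : ℂ) * (mu (q / d) * G q) else 0 := by
        refine sum_congr rfl fun q hq => ?_
        rw [cR, hgcd q hq, sum_filter, mul_sum]
        exact sum_congr rfl fun d _ => by split_ifs <;> ring
    _ = ∑ d ∈ a.divisors, (d : ℂ) * ∑ q ∈ (Icc 1 ⌊x⌋₊).filter (d ∣ ·), mu (q / d) * G q := by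
        rw [sum_comm]
        simp only [mul_sum, sum_filter, mul_ite, mul_zero]
    _ = ∑ d ∈ a.divisors, (d : ℂ) * LS G d (x / d) := by
        refine sum_congr rfl fun d hd => ?_
        have hd0 := Nat.pos_of_mem_divisors hd
        rw [sum_Icc_filter_dvd _ hd0, LS, Nat.floor_div_natCast]
        simp only [Nat.mul_div_cancel_left _ hd0]

theorem LConv_of_forall_RConv {G : ℕ → ℂ} (hconv : ∀ a : ℕ, 0 < a → RConv G a) :
    ∀ d : ℕ, 0 < d → LConv G d := by
  intro d
  induction d using Nat.strong_induction_on with | _ d ih => ?_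
  intro hd
  have hd' : (0 : ℝ) < d := by exact_mod_cast hd
  obtain ⟨L, hL⟩ := hconv d hd
  set F : ℕ → ℝ → ℂ := fun e x => (e : ℂ) * LS G e (x / e)
  have hproper : ∀ e ∈ d.properDivisors, Tendsto (F e) atTop (𝓝 (limUnder atTop (F e))) := by
    intro e he
    obtain ⟨hed, hlt⟩ := Nat.mem_properDivisors.1 he
    have he0 : 0 < e := Nat.pos_of_dvd_of_pos hed hd
    obtain ⟨l, hl⟩ := ih e hlt he0
    exact tendsto_nhds_limUnder
      ⟨_, ((tendsto_comp_div_const_atTop_iff (Nat.cast_pos.2 he0)).2 hl).const_mul (e : ℂ)⟩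
  have hself : Tendsto (F d) atTop
      (𝓝 (L - ∑ e ∈ d.properDivisors, limUnder atTop (F e))) := by
    refine (hL.sub (tendsto_finsetSum _ hproper)).congr fun x => ?_
    rw [RS_eq_sum_divisors_LS G hd, ← Nat.cons_self_properDivisors hd.ne', sum_cons]
    simp [F]
  refine ⟨(d : ℂ)⁻¹ * (L - ∑ e ∈ d.properDivisors, limUnder atTop (F e)), ?_⟩
  refine (tendsto_comp_div_const_atTop_iff hd').1 ((hself.const_mul (d : ℂ)⁻¹).congr fun x => ?_)
  simp [F, inv_mul_cancel_left₀ (show (d : ℂ) ≠ 0 by exact_mod_cast hd.ne')]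

noncomputable def LScoprime (G : ℕ → ℂ) (p m : ℕ) (y : ℝ) : ℂ :=
  ∑ K ∈ (Icc 1 ⌊y⌋₊).filter (¬ p ∣ ·), mu K * G (m * K)

theorem LS_mul_prime_pow {G : ℕ → ℂ} (hG : IsMult G) {p m : ℕ} (hp : p.Prime) (hm : 0 < m)
    (hpm : ¬ p ∣ m) (j : ℕ) (x : ℝ) :
    LS G (m * p ^ j) x
      = G (p ^ j) * LScoprime G p m x - G (p ^ (j + 1)) * LScoprime G p m (x / p) := by
  have hG_pow_mul : ∀ i K, 0 < K → ¬ p ∣ K → G (m * p ^ i * K) = G (p ^ i) * G (m * K) :=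
    fun i K hK hpK => by
      rw [show m * p ^ i * K = p ^ i * (m * K) by ring]
      exact hG.map_prime_pow_mul hp (Nat.mul_pos hm hK) (by simp [hp.dvd_mul, hpm, hpK]) i
  have hfree : ∑ K ∈ (Icc 1 ⌊x⌋₊).filter (¬ p ∣ ·), mu K * G (m * p ^ j * K)
      = G (p ^ j) * LScoprime G p m x := by
    rw [LScoprime, mul_sum]
    refine sum_congr rfl fun K hK => ?_
    simp only [mem_filter, mem_Icc] at hK
    rw [hG_pow_mul j K hK.1.1 hK.2]
    ring
  have hdvd : ∑ K ∈ (Icc 1 ⌊x⌋₊).filter (p ∣ ·), mu K * G (m * p ^ j * K)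
      = - (G (p ^ (j + 1)) * LScoprime G p m (x / p)) := by
    rw [sum_Icc_filter_dvd _ hp.pos, LScoprime, Nat.floor_div_natCast, sum_filter, mul_sum,
      ← sum_neg_distrib]
    refine sum_congr rfl fun K hK => ?_
    split_ifs with hpK
    · rw [mu_prime_mul_of_dvd hp hpK]
      ring
    · rw [mu_prime_mul_of_not_dvd hp hpK, show m * p ^ j * (p * K) = m * p ^ (j + 1) * K by ring,
        hG_pow_mul (j + 1) K (mem_Icc.1 hK).1 hpK]
      ring
  rw [LS, ← sum_filter_add_sum_filter_not _ (p ∣ ·), hdvd, hfree]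
  ring

theorem eq_zero_of_tendsto_sub_comp_div {𝕜 : Type*} [NormedField 𝕜] {A : ℝ → 𝕜} {r : ℝ}
    {c l₁ l₂ : 𝕜} (hr : 0 < r) (hc : c ≠ 1)
    (h₁ : Tendsto (fun x => A x - A (x / r)) atTop (𝓝 l₁))
    (h₂ : Tendsto (fun x => A x - c * A (x / r)) atTop (𝓝 l₂)) : l₁ = 0 := by
  have hc' : c - 1 ≠ 0 := sub_ne_zero.2 hc
  have hdiv : Tendsto (fun x => A (x / r)) atTop (𝓝 ((l₁ - l₂) / (c - 1))) :=
    ((h₁.sub h₂).div_const (c - 1)).congr fun x => by field_simp; ring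
  have hA := (tendsto_comp_div_const_atTop_iff hr).1 hdiv
  exact tendsto_nhds_unique h₁ (by simpa using hA.sub hdiv)

theorem LTendsto_zero_of_factorization_lt {G : ℕ → ℂ} (hG : IsMult G)
    (hLconv : ∀ d : ℕ, 0 < d → LConv G d) {p v d : ℕ} (hp : p.Prime)
    (hGpow : ∀ k ≤ v, G (p ^ k) = 1) (hGv : G (p ^ (v + 1)) ≠ 1) (hd : 0 < d)
    (hdv : d.factorization p < v) : LTendsto G d 0 := by
  set j := d.factorization p
  set m := ordCompl[p] d
  have hm : 0 < m := Nat.ordCompl_pos p hd.ne'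
  have hpm : ¬ p ∣ m := Nat.not_dvd_ordCompl hp hd.ne'
  obtain ⟨l₁, h₁⟩ := hLconv d hd
  obtain ⟨l₂, h₂⟩ := hLconv (m * p ^ v) (Nat.mul_pos hm (pow_pos hp.pos v))
  have hdm : m * p ^ j = d := (mul_comm _ _).trans (Nat.ordProj_mul_ordCompl_eq_self d p)
  rw [← hdm] at h₁ ⊢
  have h₁' := h₁
  simp only [LTendsto, LS_mul_prime_pow hG hp hm hpm, hGpow j hdv.le, hGpow (j + 1) hdv,
    hGpow v le_rfl, one_mul] at h₁' h₂
  rwa [← eq_zero_of_tendsto_sub_comp_div (Nat.cast_pos.2 hp.pos) hGv h₁' h₂]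

theorem cmIndex_eq_top_of_forall {G : ℕ → ℂ} {p : ℕ}
    (h : ∀ k : ℕ, 1 ≤ k → G (p ^ k) = G p ^ k) : cmIndex G p = ⊤ := by
  have huniv : {n : ℕ | ∀ k : ℕ, 1 ≤ k → k ≤ n → G (p ^ k) = G p ^ k} = Set.univ :=
    Set.eq_univ_of_forall fun _ k hk _ => h k hk
  simp [cmIndex, huniv, ENat.iSup_natCast]

theorem IsSimplyTransparent.pow_trIdx {G : ℕ → ℂ} (hG : IsMult G) {p : ℕ}
    (h : IsSimplyTransparent G p) :
    (∀ k ≤ (trIdx G p).toNat, G (p ^ k) = 1) ∧ G (p ^ ((trIdx G p).toNat + 1)) ≠ 1 := by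
  obtain ⟨hp, hGp, hcm⟩ := h
  set T := {K : ℕ | G (p ^ (K + 1)) ≠ 1}
  have hT : T.Nonempty := by
    by_contra hT
    refine hcm (cmIndex_eq_top_of_forall fun k hk => ?_)
    obtain ⟨K, rfl⟩ := Nat.exists_eq_add_of_le' hk
    have hK : K ∉ T := fun hK => hT ⟨K, hK⟩
    simpa [hGp, T] using hK
  have htr : (trIdx G p).toNat = sInf T := by
    rw [trIdx, ← ENat.natCast_sInf hT, ENat.toNat_natCast]
  rw [htr]
  refine ⟨fun k hk => ?_, Nat.sInf_mem hT⟩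
  rcases k with _ | k
  · simpa [hGp] using (hG p 1 hp.pos one_pos (Nat.coprime_one_right p)).symm
  · simpa [T] using Nat.notMem_of_lt_sInf (m := k) (s := T) (by omega)

theorem exists_simplyTransparent_not_pow_dvd {G : ℕ → ℂ} {a : ℕ} (h : ¬ transpCond G ∣ a) :
    ∃ p, IsSimplyTransparent G p ∧ ¬ p ^ (trIdx G p).toNat ∣ a := by
  by_contra! hall
  refine h (finprod_mem_dvd_of_isRelPrime (fun p hp q hq hpq => ?_) hall)
  exact Nat.coprime_iff_isRelPrime.1 (((Nat.coprime_primes hp.1 hq.1).2 hpq).pow _ _)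

theorem stmt_1_general (G : ℕ → ℂ) (hG : IsMult G)
    (hconv : ∀ a : ℕ, 0 < a → RConv G a) :
    ∀ a : ℕ, 0 < a → ¬ transpCond G ∣ a → RTendsto G a 0 := by
  intro a ha hndvd
  obtain ⟨p, hst, hpa⟩ := exists_simplyTransparent_not_pow_dvd hndvd
  obtain ⟨hGpow, hGv⟩ := hst.pow_trIdx hG
  have hav : a.factorization p < (trIdx G p).toNat :=
    lt_of_not_ge fun hle => hpa ((hst.1.pow_dvd_iff_le_factorization ha.ne').2 hle)
  have hterm : ∀ d ∈ a.divisors,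
      Tendsto (fun x : ℝ => (d : ℂ) * LS G d (x / d)) atTop (𝓝 0) := by
    intro d hd
    have hd0 := Nat.pos_of_mem_divisors hd
    have hdv : d.factorization p < (trIdx G p).toNat :=
      ((Nat.factorization_le_iff_dvd hd0.ne' ha.ne').2 (Nat.dvd_of_mem_divisors hd) p).trans_lt hav
    have hL := LTendsto_zero_of_factorization_lt hG (LConv_of_forall_RConv hconv) hst.1 hGpow hGv
      hd0 hdv
    simpa using ((tendsto_comp_div_const_atTop_iff (Nat.cast_pos.2 hd0)).2 hL).const_mul (d : ℂ)
  simpa [_root_.RTendsto, RS_eq_sum_divisors_LS G ha] using tendsto_finsetSum _ hterm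

/-- `R_G(a) = 0` whenever `a` is not a multiple of the transparency conductor `N_T(G)`
(Corollary 8.2). -/
theorem stmt_1 (G : ℕ → ℂ) (hG : IsMult G)
    (hfin : {p : ℕ | p.Prime ∧ IsBad G p}.Finite)
    (hconv : ∀ a : ℕ, 0 < a → RConv G a) :
    ∀ a : ℕ, 0 < a → ¬ transpCond G ∣ a → RTendsto G a 0 :=
  stmt_1_general G hG hconv
end

section
/- Let G : ℕ → ℂ be multiplicative with finitely many bad primes and Ramanujan conductor N(G). Then R_G(a) converges with R_G(a) = 0 for every a ∈ ℕ if and only if the coprime series S_G(N(G)) = Σ_{gcd(r,N(G))=1} G(r)·μ(r) converges to 0. -/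
open Filter Finset

/-!
Write `L_P(d, n) = ∑_{K ≤ n, K free of P} μ(K) G(dK)` (`luchtSum G d P n`). Exchanging sums gives
`R_G(a, n) = ∑_{e ∣ a} e · L_∅(e, n / e)`, so all Ramanujan series vanish iff every Lucht series
`L_∅(d, ·)` tends to `0`; and `S_G(N(G), n) = L_T(1, n)` for `T` the set of simply bad primes.

Splitting off the multiples of a prime `p ∉ P` gives, for `p ∤ d`,
`L_P(p^j d, n) = G(p^j) L_{P+p}(d, n) - G(p^{j+1}) L_{P+p}(d, n / p)`.
Comparing `j = 0` with `j = w_{p,G}` isolates `L_{P+p}(d, n / p)` with the nonzero coefficient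
`G(p^{w+1}) - G(p)^{w+1}`, so simply bad primes can be added to `P`: this is the forward direction.
Conversely primes can always be removed from `P`, and a prime that is not bad can be added: then
`g = L_{P+p}(1, ·)` satisfies `g(n) - G(p) g(n / p) → 0` with `|G(p)| < 1` or `|G(p)| > p`, which
forces `g → 0` (when `|G(p)| > p`, because `g` grows at most linearly). An induction on `d` then
removes the `p`-part of `d`, by complete multiplicativity at hyperbad `p` and by adding `p` to `P`
otherwise, and yields `L_∅(d, ·) → 0` for every `d`.
-/

open Topology

lemma mu_mul_of_coprime {a b : ℕ} (h : Nat.Coprime a b) : mu (a * b) = mu a * mu b := by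
  simp [mu, ArithmeticFunction.isMultiplicative_moebius.map_mul_of_coprime h]

lemma mu_prime_mul {p : ℕ} (hp : p.Prime) (m : ℕ) :
    mu (p * m) = if p ∣ m then 0 else -mu m := by
  split_ifs with hpm
  · have : ¬ Squarefree (p * m) := fun hsq =>
      hp.not_isUnit (Nat.isUnit_iff.mpr (Nat.isUnit_iff.mp (hsq p (mul_dvd_mul_left p hpm))))
    simp [mu, ArithmeticFunction.moebius_eq_zero_of_not_squarefree this]
  · rw [mu_mul_of_coprime ((Nat.Prime.coprime_iff_not_dvd hp).mpr hpm)]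
    simp [mu, ArithmeticFunction.moebius_apply_prime hp]

lemma sum_filter_dvd_Icc {M : Type*} [AddCommMonoid M] (f : ℕ → M) {e : ℕ} (he : 0 < e)
    (n : ℕ) : ∑ q ∈ (Icc 1 n).filter (e ∣ ·), f q = ∑ K ∈ Icc 1 (n / e), f (e * K) := by
  symm
  refine sum_nbij' (e * ·) (· / e) ?_ ?_ ?_ ?_ (fun _ _ => rfl)
  · intro K hK
    simp only [mem_filter, mem_Icc] at hK ⊢
    refine ⟨⟨Nat.mul_pos he hK.1, ?_⟩, dvd_mul_right e K⟩
    rw [mul_comm]; exact (Nat.le_div_iff_mul_le he).mp hK.2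
  · intro q hq
    simp only [mem_filter, mem_Icc] at hq ⊢
    obtain ⟨⟨hq1, hqn⟩, K, rfl⟩ := hq
    rw [Nat.mul_div_cancel_left K he]
    refine ⟨Nat.one_le_iff_ne_zero.mpr ?_, (Nat.le_div_iff_mul_le he).mpr (by linarith)⟩
    rintro rfl; simp at hq1
  · intro K _; exact Nat.mul_div_cancel_left K he
  · intro q hq
    simp only [mem_filter] at hq
    exact Nat.mul_div_cancel' hq.2

lemma tendsto_comp_div_iff {β : Type*} {f : ℕ → β} {l : Filter β} {p : ℕ} (hp : 0 < p) :
    Tendsto (fun n => f (n / p)) atTop l ↔ Tendsto f atTop l := by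
  refine ⟨fun h => ?_, fun h => h.comp (Nat.tendsto_div_const_atTop hp.ne')⟩
  have hpn : Tendsto (p * ·) atTop atTop :=
    tendsto_atTop_mono (fun n => Nat.le_mul_of_pos_left n hp) tendsto_id
  simpa [Function.comp_def, Nat.mul_div_cancel_left _ hp] using h.comp hpn

lemma tendsto_comp_floor_iff {β : Type*} {h : ℕ → β} {l : Filter β} :
    Tendsto (fun x : ℝ => h ⌊x⌋₊) atTop l ↔ Tendsto h atTop l := by
  refine ⟨fun H => ?_, fun H => H.comp tendsto_nat_floor_atTop⟩
  simpa [Function.comp_def] using H.comp tendsto_natCast_atTop_atTop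

lemma tendsto_zero_of_le_add_mul_comp {u v : ℕ → ℝ} {φ : ℕ → ℕ} {r D : ℝ} (hr0 : 0 ≤ r)
    (hr1 : r < 1) (hφ : Tendsto φ atTop atTop) (hv : Tendsto v atTop (𝓝 0))
    (hu0 : ∀ n, 0 ≤ u n) (huD : ∀ n, u n ≤ D) (h : ∀ n, u n ≤ v n + r * u (φ n)) :
    Tendsto u atTop (𝓝 0) := by
  have key : ∀ k : ℕ, ∀ ε > 0, ∀ᶠ n in atTop, u n ≤ ε + r ^ k * D := by
    intro k
    induction k with
    | zero => exact fun ε hε => Eventually.of_forall fun n => by linarith [huD n]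
    | succ k ih =>
      intro ε hε
      filter_upwards [hφ.eventually (ih (ε / 2) (half_pos hε)),
        hv.eventually (ge_mem_nhds (half_pos hε))] with n hφn hvn
      calc u n ≤ v n + r * u (φ n) := h n
        _ ≤ ε / 2 + r * (ε / 2 + r ^ k * D) := by gcongr
        _ ≤ ε + r ^ (k + 1) * D := by rw [pow_succ]; nlinarith
  refine tendsto_order.2 ⟨fun a ha => Eventually.of_forall fun n => ha.trans_le (hu0 n),
    fun a ha => ?_⟩
  have hpow : Tendsto (fun k => r ^ k * D) atTop (𝓝 0) := by
    simpa using (tendsto_pow_atTop_nhds_zero_of_lt_one hr0 hr1).mul_const D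
  obtain ⟨k, hk⟩ := (hpow.eventually (gt_mem_nhds (half_pos ha))).exists
  filter_upwards [key k (a / 2) (half_pos ha)] with n hn
  linarith

section Growth

variable {𝕜 : Type*} [NormedField 𝕜] {g : ℕ → 𝕜} {c : 𝕜} {p : ℕ} {C : ℝ}

lemma norm_le_of_norm_lt_one (hp : 2 ≤ p) (hc : ‖c‖ < 1)
    (hC : ∀ n, ‖g n - c * g (n / p)‖ ≤ C) (n : ℕ) : ‖g n‖ ≤ C / (1 - ‖c‖) := by
  have h1c : 0 < 1 - ‖c‖ := by linarith
  induction n using Nat.strong_induction_on with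
  | _ n ih =>
    have hstep := norm_le_norm_add_norm_sub' (g n) (c * g (n / p))
    rw [norm_mul] at hstep
    replace hstep : ‖g n‖ ≤ C + ‖c‖ * ‖g (n / p)‖ := by linarith [hC n]
    rcases Nat.eq_zero_or_pos n with rfl | hn
    · rw [Nat.zero_div] at hstep
      rw [le_div_iff₀ h1c]
      linarith
    · calc ‖g n‖ ≤ C + ‖c‖ * (C / (1 - ‖c‖)) := by
            grw [hstep, ih (n / p) (Nat.div_lt_self hn (by omega))]
        _ = C / (1 - ‖c‖) := by field_simp; ring

lemma norm_le_of_lt_norm (hp : 2 ≤ p) (hc : p < ‖c‖) (hg0 : g 0 = 0) {T : ℝ}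
    (hT : ∀ n, ‖g (n + 1) - g n‖ ≤ T) (hC : ∀ n, ‖g n - c * g (n / p)‖ ≤ C) (n : ℕ) :
    ‖g n‖ ≤ C / (‖c‖ - 1) := by
  have hc1 : 1 < ‖c‖ := lt_of_le_of_lt (by exact_mod_cast hp.trans' one_le_two) hc
  have hlin : ∀ n : ℕ, ‖g n‖ ≤ T * n := by
    intro n
    induction n with
    | zero => simp [hg0]
    | succ n ih =>
      calc ‖g (n + 1)‖ = ‖(g (n + 1) - g n) + g n‖ := by rw [sub_add_cancel]
        _ ≤ T + T * n := (norm_add_le _ _).trans (add_le_add (hT n) ih)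
        _ = T * (n + 1 : ℕ) := by push_cast; ring
  have hmul : ∀ n, ‖c‖ * ‖g n‖ ≤ ‖g (p * n)‖ + C := by
    intro n
    have h := hC (p * n)
    rw [Nat.mul_div_cancel_left n (by omega)] at h
    have := norm_le_norm_add_norm_sub (g (p * n)) (c * g n)
    rw [norm_mul] at this
    linarith
  have hc0 : 0 < ‖c‖ := by linarith
  have hB : 0 ≤ C / (‖c‖ - 1) := div_nonneg ((norm_nonneg _).trans (hC 0)) (by linarith)
  set r : ℝ := p / ‖c‖
  have key : ∀ k n, ‖g n‖ ≤ T * n * r ^ k + C / (‖c‖ - 1) := by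
    intro k
    induction k with
    | zero => intro n; linarith [hlin n]
    | succ k ih =>
      intro n
      rw [← mul_le_mul_iff_of_pos_left hc0]
      calc ‖c‖ * ‖g n‖ ≤ ‖g (p * n)‖ + C := hmul n
        _ ≤ T * (p * n : ℕ) * r ^ k + C / (‖c‖ - 1) + C := by grw [ih (p * n)]
        _ = ‖c‖ * (T * n * r ^ (k + 1) + C / (‖c‖ - 1)) := by
          have : ‖c‖ - 1 ≠ 0 := by linarith
          simp only [r, div_pow]; push_cast; field_simp; ring
  have hr : Tendsto (fun k => T * n * r ^ k + C / (‖c‖ - 1)) atTop (𝓝 (C / (‖c‖ - 1))) := by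
    simpa using ((tendsto_pow_atTop_nhds_zero_of_lt_one (by positivity)
      ((div_lt_one hc0).mpr hc)).const_mul (T * n)).add_const (C / (‖c‖ - 1))
  exact ge_of_tendsto' hr fun k => key k n

lemma tendsto_zero_of_tendsto_sub_mul_comp_div (hp : 2 ≤ p) (hc : ‖c‖ < 1 ∨ p < ‖c‖)
    (hg0 : g 0 = 0) {T : ℝ} (hT : ∀ n, ‖g (n + 1) - g n‖ ≤ T)
    (hf : Tendsto (fun n => g n - c * g (n / p)) atTop (𝓝 0)) : Tendsto g atTop (𝓝 0) := by
  obtain ⟨C, hC⟩ := hf.norm.bddAbove_range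
  replace hC : ∀ n, ‖g n - c * g (n / p)‖ ≤ C := fun n => hC ⟨n, rfl⟩
  have hv := tendsto_zero_iff_norm_tendsto_zero.mp hf
  rw [tendsto_zero_iff_norm_tendsto_zero]
  rcases hc with hc | hc
  · refine tendsto_zero_of_le_add_mul_comp (norm_nonneg c) hc
      (Nat.tendsto_div_const_atTop (n := p) (by omega)) hv (fun n => norm_nonneg _)
      (norm_le_of_norm_lt_one hp hc hC) fun n => ?_
    have := norm_le_norm_add_norm_sub' (g n) (c * g (n / p))
    rw [norm_mul] at this
    linarith
  · have hc0 : 0 < ‖c‖ := lt_of_le_of_lt (Nat.cast_nonneg p) hc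
    have hpn : Tendsto (p * ·) atTop atTop :=
      tendsto_atTop_mono (fun n => Nat.le_mul_of_pos_left n (by omega)) tendsto_id
    refine tendsto_zero_of_le_add_mul_comp (inv_nonneg.mpr hc0.le)
      (inv_lt_one_of_one_lt₀ (lt_of_le_of_lt (by exact_mod_cast hp.trans' one_le_two) hc))
      hpn (by simpa using (hv.comp hpn).div_const ‖c‖) (fun n => norm_nonneg _)
      (norm_le_of_lt_norm hp hc hg0 hT hC) fun n => ?_
    have := norm_le_norm_add_norm_sub (g (p * n)) (c * g n)
    rw [norm_mul] at this
    simp only [Nat.mul_div_cancel_left n (by omega : 0 < p)]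
    rw [inv_mul_eq_div, ← add_div, le_div_iff₀ hc0]
    linarith

end Growth

noncomputable def luchtSum (G : ℕ → ℂ) (d : ℕ) (P : Finset ℕ) (n : ℕ) : ℂ :=
  ∑ K ∈ (Icc 1 n).filter (fun K => ∀ q ∈ P, ¬ q ∣ K), mu K * G (d * K)

section LuchtSum

variable {G : ℕ → ℂ}

lemma luchtSum_zero (d : ℕ) (P : Finset ℕ) : luchtSum G d P 0 = 0 := by
  simp [luchtSum]

lemma luchtSum_empty (d n : ℕ) :
    luchtSum G d ∅ n = ∑ K ∈ Icc 1 n, mu K * G (d * K) := by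
  simp [luchtSum]

lemma luchtSum_succ_sub (d : ℕ) (P : Finset ℕ) (n : ℕ) :
    luchtSum G d P (n + 1) - luchtSum G d P n =
      if ∀ q ∈ P, ¬ q ∣ n + 1 then mu (n + 1) * G (d * (n + 1)) else 0 := by
  simp only [luchtSum, sum_filter]
  rw [sum_Icc_succ_top (by omega), add_sub_cancel_left]

lemma norm_luchtSum_succ_sub_le {P Q : Finset ℕ} (hPQ : P ⊆ Q) (d n : ℕ) :
    ‖luchtSum G d Q (n + 1) - luchtSum G d Q n‖ ≤
      ‖luchtSum G d P (n + 1) - luchtSum G d P n‖ := by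
  rw [luchtSum_succ_sub, luchtSum_succ_sub]
  split_ifs with hQ hP hP
  · rfl
  · exact absurd (fun q hq => hQ q (hPQ hq)) hP
  all_goals simp only [norm_zero, le_refl, norm_nonneg]

lemma luchtSum_split {p : ℕ} (hp : p.Prime) {P : Finset ℕ} (hP : ∀ q ∈ P, q.Prime)
    (hpP : p ∉ P) (d n : ℕ) :
    luchtSum G d P n = luchtSum G d (insert p P) n - luchtSum G (d * p) (insert p P) (n / p) := by
  have hfree : ∀ m, (∀ q ∈ P, ¬ q ∣ p * m) ↔ ∀ q ∈ P, ¬ q ∣ m := by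
    refine fun m => forall₂_congr fun q hq => not_congr ⟨fun h => ?_, fun h => h.mul_left p⟩
    rcases (Nat.Prime.dvd_mul (hP q hq)).mp h with h | h
    · exact absurd ((Nat.prime_dvd_prime_iff_eq (hP q hq) hp).mp h ▸ hq) hpP
    · exact h
  set f : ℕ → ℂ := fun K => if ∀ q ∈ P, ¬ q ∣ K then mu K * G (d * K) else 0
  have hsplit := sum_filter_add_sum_filter_not (Icc 1 n) (p ∣ ·) f
  rw [sum_filter_dvd_Icc _ hp.pos] at hsplit
  have hnonmultiple : ∑ K ∈ (Icc 1 n).filter (¬ p ∣ ·), f K = luchtSum G d (insert p P) n := by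
    simp only [luchtSum, f, sum_filter, forall_mem_insert]
    refine sum_congr rfl fun K _ => ?_
    by_cases hpK : p ∣ K <;> simp [hpK]
  have hmultiple : ∑ m ∈ Icc 1 (n / p), f (p * m) = -luchtSum G (d * p) (insert p P) (n / p) := by
    simp only [luchtSum, f, sum_filter, forall_mem_insert, ← sum_neg_distrib]
    refine sum_congr rfl fun m _ => ?_
    simp_rw [hfree, mu_prime_mul hp, ← mul_assoc d]
    by_cases hpm : p ∣ m <;> simp [hpm, neg_ite]
  calc luchtSum G d P n = ∑ K ∈ Icc 1 n, f K := by simp only [luchtSum, sum_filter, f]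
    _ = _ := by rw [← hsplit, hnonmultiple, hmultiple]; ring

variable {p d : ℕ} {P : Finset ℕ}

lemma luchtSum_pow_mul (hG : IsMult G) (hp : p.Prime) (hpP : p ∈ P) (hd : 0 < d)
    (hpd : ¬ p ∣ d) (j n : ℕ) : luchtSum G (p ^ j * d) P n = G (p ^ j) * luchtSum G d P n := by
  rw [luchtSum, luchtSum, mul_sum]
  refine sum_congr rfl fun K hK => ?_
  simp only [mem_filter, mem_Icc] at hK
  have hcop : Nat.Coprime (p ^ j) (d * K) :=
    Nat.Coprime.pow_left j ((hp.coprime_iff_not_dvd.mpr hpd).mul_right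
      (hp.coprime_iff_not_dvd.mpr (hK.2 p hpP)))
  rw [mul_assoc, hG _ _ (pow_pos hp.pos j) (Nat.mul_pos hd hK.1.1) hcop, mul_left_comm]

variable (hG : IsMult G) (hp : p.Prime) (hP : ∀ q ∈ P, q.Prime) (hpP : p ∉ P) (hd : 0 < d)
  (hpd : ¬ p ∣ d)
include hG hp hP hpP hd hpd

lemma luchtSum_eq_sub (n : ℕ) :
    luchtSum G d P n =
      luchtSum G d (insert p P) n - G p * luchtSum G d (insert p P) (n / p) := by
  have h := luchtSum_pow_mul hG hp (mem_insert_self p P) hd hpd 1 (n / p)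
  rw [pow_one] at h
  rw [luchtSum_split hp hP hpP, mul_comm d, h]

lemma luchtSum_pow_mul_eq_sub (j n : ℕ) :
    luchtSum G (p ^ j * d) P n =
      G (p ^ j) * luchtSum G d (insert p P) n
        - G (p ^ (j + 1)) * luchtSum G d (insert p P) (n / p) := by
  rw [luchtSum_split hp hP hpP, mul_right_comm, ← pow_succ,
    luchtSum_pow_mul hG hp (mem_insert_self p P) hd hpd,
    luchtSum_pow_mul hG hp (mem_insert_self p P) hd hpd]

lemma pow_mul_luchtSum_sub_luchtSum_pow_mul {j : ℕ} (hj : G (p ^ j) = G p ^ j) (n : ℕ) :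
    G p ^ j * luchtSum G d P n - luchtSum G (p ^ j * d) P n =
      (G (p ^ (j + 1)) - G p ^ (j + 1)) * luchtSum G d (insert p P) (n / p) := by
  rw [luchtSum_eq_sub hG hp hP hpP hd hpd, luchtSum_pow_mul_eq_sub hG hp hP hpP hd hpd, hj]
  ring

end LuchtSum

section CmIndex

variable {G : ℕ → ℂ} {p : ℕ}

lemma le_cmIndex_iff {j : ℕ} :
    (j : ℕ∞) ≤ cmIndex G p ↔ ∀ k, 1 ≤ k → k ≤ j → G (p ^ k) = G p ^ k := by
  refine ⟨fun h k hk1 hkj => ?_, fun h => le_biSup (fun w : ℕ => (w : ℕ∞)) h⟩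
  by_contra hne
  have : cmIndex G p ≤ (k - 1 : ℕ) := iSup₂_le fun w hw => by
    have : w ≤ k - 1 := by
      by_contra hw'
      exact hne (hw k hk1 (by omega))
    exact_mod_cast this
  have : j ≤ k - 1 := by exact_mod_cast h.trans this
  omega

lemma one_le_toNat_cmIndex (h : cmIndex G p ≠ ⊤) : 1 ≤ (cmIndex G p).toNat := by
  have h1 : ((1 : ℕ) : ℕ∞) ≤ cmIndex G p :=
    le_cmIndex_iff.mpr fun k hk1 hk => by rw [le_antisymm hk hk1, pow_one, pow_one]
  rw [← ENat.natCast_toNat h] at h1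
  exact_mod_cast h1

lemma pow_toNat_cmIndex (h : cmIndex G p ≠ ⊤) :
    G (p ^ (cmIndex G p).toNat) = G p ^ (cmIndex G p).toNat :=
  le_cmIndex_iff.mp (ENat.natCast_toNat h).le _ (one_le_toNat_cmIndex h) le_rfl

lemma pow_toNat_cmIndex_succ_ne (h : cmIndex G p ≠ ⊤) :
    G (p ^ ((cmIndex G p).toNat + 1)) ≠ G p ^ ((cmIndex G p).toNat + 1) := by
  intro heq
  have : (((cmIndex G p).toNat + 1 : ℕ) : ℕ∞) ≤ cmIndex G p := le_cmIndex_iff.mpr fun k hk1 hk => by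
    rcases Nat.lt_or_ge k ((cmIndex G p).toNat + 1) with hlt | hge
    · exact le_cmIndex_iff.mp (ENat.natCast_toNat h).le k hk1 (by omega)
    · rwa [le_antisymm hk hge]
  rw [← ENat.natCast_toNat h] at this
  exact absurd (by exact_mod_cast this) (Nat.not_succ_le_self _)

end CmIndex

section Engines

variable {G : ℕ → ℂ} (hG : IsMult G)
include hG

theorem tendsto_luchtSum_of_cmIndex_ne_top
    (hL : ∀ d, 0 < d → Tendsto (luchtSum G d ∅) atTop (𝓝 0)) {P : Finset ℕ}
    (hP : ∀ q ∈ P, q.Prime ∧ cmIndex G q ≠ ⊤) {d : ℕ} (hd : 0 < d) (hdP : ∀ q ∈ P, ¬ q ∣ d) :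
    Tendsto (luchtSum G d P) atTop (𝓝 0) := by
  induction P using Finset.induction_on generalizing d with
  | empty => exact hL d hd
  | @insert p P hpP ih =>
    obtain ⟨hp, hptop⟩ := hP p (mem_insert_self p P)
    have hP' := fun q hq => hP q (mem_insert_of_mem hq)
    have hpd := hdP p (mem_insert_self p P)
    set w := (cmIndex G p).toNat
    have hPw : ∀ q ∈ P, ¬ q ∣ p ^ w * d := fun q hq hqd => by
      rcases (Nat.Prime.dvd_mul (hP' q hq).1).mp hqd with h | h
      · exact hpP ((Nat.prime_dvd_prime_iff_eq (hP' q hq).1 hp).mp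
          ((hP' q hq).1.dvd_of_dvd_pow h) ▸ hq)
      · exact hdP q (mem_insert_of_mem hq) h
    have hdefect := pow_mul_luchtSum_sub_luchtSum_pow_mul hG hp (fun q hq => (hP' q hq).1) hpP
      hd hpd (pow_toNat_cmIndex hptop)
    have hne : G (p ^ (w + 1)) - G p ^ (w + 1) ≠ 0 :=
      sub_ne_zero.mpr (pow_toNat_cmIndex_succ_ne hptop)
    have hlim : Tendsto (fun n => (G (p ^ (w + 1)) - G p ^ (w + 1)) *
        luchtSum G d (insert p P) (n / p)) atTop (𝓝 0) := by
      refine Tendsto.congr hdefect ?_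
      simpa using ((ih hP' hd fun q hq => hdP q (mem_insert_of_mem hq)).const_mul (G p ^ w)).sub
        (ih hP' (Nat.mul_pos (pow_pos hp.pos w) hd) hPw)
    rw [← tendsto_comp_div_iff hp.pos]
    simpa [hne] using hlim.const_mul (G (p ^ (w + 1)) - G p ^ (w + 1))⁻¹

lemma tendsto_luchtSum_of_insert {p : ℕ} (hp : p.Prime) {P : Finset ℕ} (hP : ∀ q ∈ P, q.Prime)
    (h : Tendsto (luchtSum G 1 (insert p P)) atTop (𝓝 0)) :
    Tendsto (luchtSum G 1 P) atTop (𝓝 0) := by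
  by_cases hpP : p ∈ P
  · rwa [insert_eq_of_mem hpP] at h
  refine Tendsto.congr (fun n => (luchtSum_eq_sub hG hp hP hpP one_pos hp.not_dvd_one n).symm) ?_
  simpa using h.sub (((tendsto_comp_div_iff hp.pos).mpr h).const_mul (G p))

lemma tendsto_luchtSum_insert_of_not_isBad {p : ℕ} (hp : p.Prime) (hbad : ¬ IsBad G p)
    {P : Finset ℕ} (hP : ∀ q ∈ P, q.Prime) (h : Tendsto (luchtSum G 1 P) atTop (𝓝 0)) :
    Tendsto (luchtSum G 1 (insert p P)) atTop (𝓝 0) := by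
  by_cases hpP : p ∈ P
  · rwa [insert_eq_of_mem hpP]
  have hc : ‖G p‖ < 1 ∨ (p : ℝ) < ‖G p‖ := by
    rw [IsBad, not_and_or, not_le, not_le] at hbad
    exact hbad
  obtain ⟨T, hT⟩ := ((h.comp (tendsto_add_atTop_nat 1)).sub h).norm.bddAbove_range
  refine tendsto_zero_of_tendsto_sub_mul_comp_div hp.two_le hc (luchtSum_zero 1 _)
    (fun n => (norm_luchtSum_succ_sub_le (subset_insert p P) 1 n).trans (hT ⟨n, rfl⟩)) ?_
  exact h.congr fun n => luchtSum_eq_sub hG hp hP hpP one_pos hp.not_dvd_one n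

lemma tendsto_luchtSum_of_union {A S : Finset ℕ} (hAS : ∀ q ∈ A ∪ S, q.Prime)
    (h : Tendsto (luchtSum G 1 (A ∪ S)) atTop (𝓝 0)) : Tendsto (luchtSum G 1 S) atTop (𝓝 0) := by
  induction A using Finset.induction_on with
  | empty => simpa using h
  | @insert p A _ ih =>
    rw [insert_union] at hAS h
    exact ih (fun q hq => hAS q (mem_insert_of_mem hq))
      (tendsto_luchtSum_of_insert hG (hAS p (mem_insert_self _ _))
        (fun q hq => hAS q (mem_insert_of_mem hq)) h)

lemma tendsto_luchtSum_union_of_not_isBad {A S : Finset ℕ}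
    (hA : ∀ q ∈ A, q.Prime ∧ (q ∈ S ∨ ¬ IsBad G q)) (hS : ∀ q ∈ S, q.Prime)
    (h : Tendsto (luchtSum G 1 S) atTop (𝓝 0)) : Tendsto (luchtSum G 1 (A ∪ S)) atTop (𝓝 0) := by
  induction A using Finset.induction_on with
  | empty => simpa using h
  | @insert p A _ ih =>
    have hA' := fun q hq => hA q (mem_insert_of_mem hq)
    have hAS : ∀ q ∈ A ∪ S, q.Prime := fun q hq =>
      (mem_union.mp hq).elim (fun hq => (hA' q hq).1) (hS q)
    rw [insert_union]
    rcases (hA p (mem_insert_self p A)).2 with hpS | hbad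
    · rw [insert_eq_of_mem (mem_union_right A hpS)]
      exact ih hA'
    · exact tendsto_luchtSum_insert_of_not_isBad hG (hA p (mem_insert_self p A)).1 hbad hAS (ih hA')

lemma tendsto_luchtSum_one_of_not_isHyperbad {T : Finset ℕ} (hT : ∀ q ∈ T, q.Prime)
    (hTG : ∀ q, IsSimplyBad G q → q ∈ T) (h : Tendsto (luchtSum G 1 T) atTop (𝓝 0))
    {P : Finset ℕ} (hP : ∀ q ∈ P, q.Prime ∧ ¬ IsHyperbad G q) :
    Tendsto (luchtSum G 1 P) atTop (𝓝 0) := by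
  have hPT : ∀ q ∈ P, q.Prime ∧ (q ∈ T ∨ ¬ IsBad G q) := fun q hq => by
    obtain ⟨hq, hhyp⟩ := hP q hq
    refine ⟨hq, or_iff_not_imp_right.mpr fun hbad => hTG q ⟨hq, not_not.mp hbad, ?_⟩⟩
    exact fun htop => hhyp ⟨hq, not_not.mp hbad, htop⟩
  refine tendsto_luchtSum_of_union hG (A := T) (fun q hq => ?_)
    (union_comm P T ▸ tendsto_luchtSum_union_of_not_isBad hG hPT hT h)
  exact (mem_union.mp hq).elim (hT q) fun hq => (hP q hq).1

theorem tendsto_luchtSum_of_not_isHyperbad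
    (h1 : ∀ P : Finset ℕ, (∀ q ∈ P, q.Prime ∧ ¬ IsHyperbad G q) →
      Tendsto (luchtSum G 1 P) atTop (𝓝 0))
    {d : ℕ} (hd : 0 < d) {P : Finset ℕ} (hP : ∀ q ∈ P, q.Prime ∧ ¬ IsHyperbad G q)
    (hdP : ∀ q ∈ P, ¬ q ∣ d) : Tendsto (luchtSum G d P) atTop (𝓝 0) := by
  induction d using Nat.strong_induction_on generalizing P with
  | _ d ih =>
    rcases Nat.eq_or_lt_of_le hd with rfl | hd1
    · exact h1 P hP
    obtain ⟨p, hp, hpd⟩ := Nat.exists_prime_and_dvd hd1.ne'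
    obtain ⟨j, d', hpd', rfl⟩ := Nat.exists_eq_pow_mul_and_not_dvd hd.ne' p hp.ne_one
    have hd' : 0 < d' := Nat.pos_of_mul_pos_left hd
    have hj : j ≠ 0 := by
      rintro rfl
      exact hpd' (by simpa using hpd)
    have hlt : d' < p ^ j * d' := lt_mul_left hd' (Nat.one_lt_pow hj hp.one_lt)
    have hPprime : ∀ q ∈ P, q.Prime := fun q hq => (hP q hq).1
    have hpP : p ∉ P := fun h => hdP p h (dvd_mul_of_dvd_left (dvd_pow_self p hj) _)
    have hdP' : ∀ q ∈ P, ¬ q ∣ d' := fun q hq h => hdP q hq (dvd_mul_of_dvd_right h _)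
    by_cases htop : cmIndex G p = ⊤
    · have hcm := le_cmIndex_iff.mp (htop ▸ le_top : ((j + 1 : ℕ) : ℕ∞) ≤ cmIndex G p)
      have hstrip := pow_mul_luchtSum_sub_luchtSum_pow_mul hG hp hPprime hpP hd' hpd'
        (hcm j (by omega) (by omega))
      simp_rw [hcm (j + 1) (by omega) le_rfl, sub_self, zero_mul, sub_eq_zero] at hstrip
      have hIH := (ih d' hlt hd' hP hdP').const_mul (G p ^ j)
      rw [mul_zero] at hIH
      exact hIH.congr hstrip
    · have hIH := ih d' hlt hd' (P := insert p P)
        (forall_mem_insert _ _ _ |>.mpr ⟨⟨hp, fun h => htop h.2.2⟩, hP⟩)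
        (forall_mem_insert _ _ _ |>.mpr ⟨hpd', hdP'⟩)
      refine Tendsto.congr (fun n => (luchtSum_pow_mul_eq_sub hG hp hPprime hpP hd' hpd' j n).symm) ?_
      simpa using (hIH.const_mul _).sub (((tendsto_comp_div_iff hp.pos).mpr hIH).const_mul _)

end Engines

section Series

variable {G : ℕ → ℂ}

lemma sum_mul_cR_eq {a : ℕ} (ha : 0 < a) (n : ℕ) :
    ∑ q ∈ Icc 1 n, G q * cR q a = ∑ e ∈ a.divisors, (e : ℂ) * luchtSum G e ∅ (n / e) := by
  simp only [cR, mul_sum, luchtSum_empty]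
  rw [sum_comm' (t' := a.divisors) (s' := fun e => (Icc 1 n).filter (e ∣ ·))]
  · refine sum_congr rfl fun e he => ?_
    have he0 : 0 < e := Nat.pos_of_mem_divisors he
    rw [sum_filter_dvd_Icc _ he0]
    refine sum_congr rfl fun K _ => ?_
    rw [Nat.mul_div_cancel_left K he0]
    ring
  · intro q e
    simp only [mem_Icc, Nat.mem_divisors, Nat.dvd_gcd_iff, mem_filter]
    have := (Nat.gcd_pos_of_pos_right q ha).ne'
    have := ha.ne'
    tauto

lemma rTendsto_iff {a : ℕ} (ha : 0 < a) {L : ℂ} :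
    RTendsto G a L ↔
      Tendsto (fun n => ∑ e ∈ a.divisors, (e : ℂ) * luchtSum G e ∅ (n / e)) atTop (𝓝 L) := by
  simp only [_root_.RTendsto, RS, sum_mul_cR_eq ha]
  exact tendsto_comp_floor_iff (h := fun n => ∑ e ∈ a.divisors, (e : ℂ) * luchtSum G e ∅ (n / e))

lemma forall_rTendsto_zero_iff :
    (∀ a, 0 < a → RTendsto G a 0) ↔ ∀ d, 0 < d → Tendsto (luchtSum G d ∅) atTop (𝓝 0) := by
  refine ⟨fun h d hd => ?_, fun h a ha => (rTendsto_iff ha).mpr ?_⟩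
  · induction d using Nat.strong_induction_on with
    | _ d ih =>
      have hproper : Tendsto (fun n => ∑ e ∈ d.properDivisors, (e : ℂ) * luchtSum G e ∅ (n / e))
          atTop (𝓝 0) := by
        simpa using tendsto_finsetSum _ fun e he => ((tendsto_comp_div_iff
          (Nat.pos_of_mem_properDivisors he)).mpr (ih e (Nat.mem_properDivisors.mp he).2
            (Nat.pos_of_mem_properDivisors he))).const_mul (e : ℂ)
      have hself : Tendsto (fun n => (d : ℂ) * luchtSum G d ∅ (n / d)) atTop (𝓝 0) := by
        simpa [← Nat.cons_self_properDivisors hd.ne', sum_cons] using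
          ((rTendsto_iff hd).mp (h d hd)).sub hproper
      rw [← tendsto_comp_div_iff hd]
      simpa [hd.ne'] using hself.const_mul (d : ℂ)⁻¹
  · simpa using tendsto_finsetSum _ fun e he => ((tendsto_comp_div_iff
      (Nat.pos_of_mem_divisors he)).mpr (h e (Nat.pos_of_mem_divisors he))).const_mul (e : ℂ)

end Series

section Conductor

variable {G : ℕ → ℂ} (hSB : {p | IsSimplyBad G p}.Finite)
include hSB

lemma ramCond_eq_prod : ramCond G = ∏ p ∈ hSB.toFinset, p ^ (cmIndex G p).toNat := by
  rw [ramCond, ← finprod_mem_coe_finset, hSB.coe_toFinset]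

lemma coprime_ramCond_iff (r : ℕ) : Nat.Coprime r (ramCond G) ↔ ∀ p ∈ hSB.toFinset, ¬ p ∣ r := by
  rw [ramCond_eq_prod hSB, Nat.coprime_prod_right_iff]
  refine forall₂_congr fun p hp => ?_
  obtain ⟨hp, -, htop⟩ := hSB.mem_toFinset.mp hp
  rw [Nat.coprime_pow_right_iff (one_le_toNat_cmIndex htop), Nat.coprime_comm,
    hp.coprime_iff_not_dvd]

lemma sTendsto_ramCond_iff {L : ℂ} :
    STendsto G (ramCond G) L ↔ Tendsto (luchtSum G 1 hSB.toFinset) atTop (𝓝 L) := by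
  have hSS : ∀ x, SS G (ramCond G) x = luchtSum G 1 hSB.toFinset ⌊x⌋₊ := fun x => by
    simp only [SS, luchtSum, one_mul, mul_comm (G _), coprime_ramCond_iff hSB]
  simp only [STendsto, hSS]
  exact tendsto_comp_floor_iff (h := luchtSum G 1 hSB.toFinset)

end Conductor

/-- Characterization of multiplicative Ramanujan coefficients of the null function
(Theorem 9.1). -/
theorem stmt_4 (G : ℕ → ℂ) (hG : IsMult G)
    (hfin : {p : ℕ | p.Prime ∧ IsBad G p}.Finite) :
    (∀ a : ℕ, 0 < a → RTendsto G a 0) ↔ STendsto G (ramCond G) 0 := by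
  have hSB : {p | IsSimplyBad G p}.Finite := hfin.subset fun p hp => ⟨hp.1, hp.2.1⟩
  have hT : ∀ p ∈ hSB.toFinset, p.Prime := fun p hp => (hSB.mem_toFinset.mp hp).1
  rw [forall_rTendsto_zero_iff, sTendsto_ramCond_iff hSB]
  refine ⟨fun hL => ?_, fun hS d hd => ?_⟩
  · exact tendsto_luchtSum_of_cmIndex_ne_top hG hL
      (fun p hp => ⟨hT p hp, (hSB.mem_toFinset.mp hp).2.2⟩) one_pos
      (fun p hp => (hT p hp).not_dvd_one)
  · exact tendsto_luchtSum_of_not_isHyperbad hG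
      (fun P hP => tendsto_luchtSum_one_of_not_isHyperbad hG hT
        (fun p hp => hSB.mem_toFinset.mpr hp) hS hP) hd (by simp) (by simp)
end
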